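/- Let ξ¹, ξ² : ℝ² → ℝ be smooth functions of (x,y), ξ³ : ℝ → ℝ smooth, and η, α³³, α¹¹, α¹², α²², β¹, β² : ℝ⁴ → ℝ smooth functions of (x,y,t,u). For (x,y,t,u,v₁,v₂,v₃,f,g) ∈ ℝ⁹ define μ¹ = (α³³ + 2ξ³'(t) + η_u − ξ¹_x)f − ξ¹_y g + α¹¹ v₁ + α¹² v₂ + β¹, μ² = (α³³ + 2ξ³'(t) + η_u − ξ²_y)g − ξ²_x f − α¹² v₁ + α²² v₂ + β², and ζ₃ = η_t + (η_u + ξ³'(t))v₃. If the identity ∂_x μ¹ + v₁ ∂_u μ¹ + ∂_y μ² + v₂ ∂_u μ² − ∂_t ζ₃ − v₃ ∂_u ζ₃ = 0 holds for all real values of (x,y,t,u,v₁,v₂,v₃,f,g), then η_uu = 0 everywhere and there exist smooth functions λ : ℝ² → ℝ and γ : ℝ³ → ℝ such that η(x,y,t,u) = (λ(x,y) − ½ξ³'(t))u + γ(x,y,t). -/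

import Mathlib

/- STATEMENT 6: the determining condition ℋ = 0 for the family
f(x,y,t,u,u_x,u_y)_x + g(x,y,t,u,u_x,u_y)_y = u_tt (case ∂f/∂u_t = ∂g/∂u_t = 0,
h = 0) forces η_uu = 0, with η = (λ(x,y) − ½ξ³'(t))u + γ(x,y,t). -/

noncomputable section

/-- Partial derivative with respect to the first variable (x) of a function on ℝ⁴. -/
def pd1 (f : ℝ × ℝ × ℝ × ℝ → ℝ) (p : ℝ × ℝ × ℝ × ℝ) : ℝ :=
  deriv (fun s => f (s, p.2.1, p.2.2.1, p.2.2.2)) p.1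

/-- Partial derivative with respect to the second variable (y). -/
def pd2 (f : ℝ × ℝ × ℝ × ℝ → ℝ) (p : ℝ × ℝ × ℝ × ℝ) : ℝ :=
  deriv (fun s => f (p.1, s, p.2.2.1, p.2.2.2)) p.2.1

/-- Partial derivative with respect to the third variable (t). -/
def pd3 (f : ℝ × ℝ × ℝ × ℝ → ℝ) (p : ℝ × ℝ × ℝ × ℝ) : ℝ :=
  deriv (fun s => f (p.1, p.2.1, s, p.2.2.2)) p.2.2.1

/-- Partial derivative with respect to the fourth variable (u). -/
def pd4 (f : ℝ × ℝ × ℝ × ℝ → ℝ) (p : ℝ × ℝ × ℝ × ℝ) : ℝ :=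
  deriv (fun s => f (p.1, p.2.1, p.2.2.1, s)) p.2.2.2

/-- Partial derivative with respect to the first variable of a function on ℝ². -/
def qd1 (f : ℝ × ℝ → ℝ) (q : ℝ × ℝ) : ℝ := deriv (fun s => f (s, q.2)) q.1

/-- Partial derivative with respect to the second variable of a function on ℝ². -/
def qd2 (f : ℝ × ℝ → ℝ) (q : ℝ × ℝ) : ℝ := deriv (fun s => f (q.1, s)) q.2


section AuxLemmas

lemma line1_hasDerivAt {F : ℝ × ℝ × ℝ × ℝ → ℝ} (hF : Differentiable ℝ F) (x y t u : ℝ) :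
    HasDerivAt (fun s => F (s, y, t, u)) (fderiv ℝ F (x, y, t, u) (1, 0, 0, 0)) x := by
  have h1 : HasDerivAt (fun s : ℝ => ((s, y, t, u) : ℝ × ℝ × ℝ × ℝ)) (1, 0, 0, 0) x :=
    (hasDerivAt_id x).prodMk ((hasDerivAt_const x y).prodMk
      ((hasDerivAt_const x t).prodMk (hasDerivAt_const x u)))
  exact (hF (x, y, t, u)).hasFDerivAt.comp_hasDerivAt x h1

lemma line3_hasDerivAt {F : ℝ × ℝ × ℝ × ℝ → ℝ} (hF : Differentiable ℝ F) (x y t u : ℝ) :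
    HasDerivAt (fun s => F (x, y, s, u)) (fderiv ℝ F (x, y, t, u) (0, 0, 1, 0)) t := by
  have h1 : HasDerivAt (fun s : ℝ => ((x, y, s, u) : ℝ × ℝ × ℝ × ℝ)) (0, 0, 1, 0) t :=
    (hasDerivAt_const t x).prodMk ((hasDerivAt_const t y).prodMk
      ((hasDerivAt_id t).prodMk (hasDerivAt_const t u)))
  exact (hF (x, y, t, u)).hasFDerivAt.comp_hasDerivAt t h1

lemma line4_hasDerivAt {F : ℝ × ℝ × ℝ × ℝ → ℝ} (hF : Differentiable ℝ F) (x y t u : ℝ) :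
    HasDerivAt (fun s => F (x, y, t, s)) (fderiv ℝ F (x, y, t, u) (0, 0, 0, 1)) u := by
  have h1 : HasDerivAt (fun s : ℝ => ((x, y, t, s) : ℝ × ℝ × ℝ × ℝ)) (0, 0, 0, 1) u :=
    (hasDerivAt_const u x).prodMk ((hasDerivAt_const u y).prodMk
      ((hasDerivAt_const u t).prodMk (hasDerivAt_id u)))
  exact (hF (x, y, t, u)).hasFDerivAt.comp_hasDerivAt u h1

lemma pd3_eq {F : ℝ × ℝ × ℝ × ℝ → ℝ} (hF : Differentiable ℝ F) (x y t u : ℝ) :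
    pd3 F (x, y, t, u) = fderiv ℝ F (x, y, t, u) (0, 0, 1, 0) :=
  (line3_hasDerivAt hF x y t u).deriv

lemma pd4_eq {F : ℝ × ℝ × ℝ × ℝ → ℝ} (hF : Differentiable ℝ F) (x y t u : ℝ) :
    pd4 F (x, y, t, u) = fderiv ℝ F (x, y, t, u) (0, 0, 0, 1) :=
  (line4_hasDerivAt hF x y t u).deriv

lemma pd3_contDiff {F : ℝ × ℝ × ℝ × ℝ → ℝ} (hF : ContDiff ℝ (⊤ : ℕ∞) F) : ContDiff ℝ (⊤ : ℕ∞) (pd3 F) := by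
  have h : pd3 F = fun p => fderiv ℝ F p (0, 0, 1, 0) := by
    funext p; obtain ⟨x, y, t, u⟩ := p; exact pd3_eq (hF.differentiable (by simp)) x y t u
  rw [h]
  exact (hF.fderiv_right (by simp)).clm_apply contDiff_const

lemma pd4_contDiff {F : ℝ × ℝ × ℝ × ℝ → ℝ} (hF : ContDiff ℝ (⊤ : ℕ∞) F) : ContDiff ℝ (⊤ : ℕ∞) (pd4 F) := by
  have h : pd4 F = fun p => fderiv ℝ F p (0, 0, 0, 1) := by
    funext p; obtain ⟨x, y, t, u⟩ := p; exact pd4_eq (hF.differentiable (by simp)) x y t u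
  rw [h]
  exact (hF.fderiv_right (by simp)).clm_apply contDiff_const

lemma line3_hasDerivAt' {F : ℝ × ℝ × ℝ × ℝ → ℝ} (hF : Differentiable ℝ F) (x y t u : ℝ) :
    HasDerivAt (fun s => F (x, y, s, u)) (pd3 F (x, y, t, u)) t := by
  rw [pd3_eq hF x y t u]; exact line3_hasDerivAt hF x y t u

lemma line4_hasDerivAt' {F : ℝ × ℝ × ℝ × ℝ → ℝ} (hF : Differentiable ℝ F) (x y t u : ℝ) :
    HasDerivAt (fun s => F (x, y, t, s)) (pd4 F (x, y, t, u)) u := by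
  rw [pd4_eq hF x y t u]; exact line4_hasDerivAt hF x y t u

lemma pd34_symm {F : ℝ × ℝ × ℝ × ℝ → ℝ} (hF : ContDiff ℝ (⊤ : ℕ∞) F) (x y t u : ℝ) :
    pd3 (pd4 F) (x, y, t, u) = pd4 (pd3 F) (x, y, t, u) := by
  have hd : Differentiable ℝ F := hF.differentiable (by simp)
  have hd2 : Differentiable ℝ (fderiv ℝ F) := (hF.fderiv_right (m := (⊤ : ℕ∞)) (by simp)).differentiable (by simp)
  have hsymm := second_derivative_symmetric (f := F) (f' := fderiv ℝ F)
      (f'' := fderiv ℝ (fderiv ℝ F) (x, y, t, u)) (fun q => (hd q).hasFDerivAt)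
      (hd2 (x, y, t, u)).hasFDerivAt
  have e4 : pd4 F = fun q => fderiv ℝ F q (0, 0, 0, 1) := by
    funext q; obtain ⟨a, b, c, d⟩ := q; exact pd4_eq hd a b c d
  have e3 : pd3 F = fun q => fderiv ℝ F q (0, 0, 1, 0) := by
    funext q; obtain ⟨a, b, c, d⟩ := q; exact pd3_eq hd a b c d
  have happ : ∀ w v : ℝ × ℝ × ℝ × ℝ,
      fderiv ℝ (fun q => fderiv ℝ F q w) (x, y, t, u) v
        = fderiv ℝ (fderiv ℝ F) (x, y, t, u) v w := by
    intro w v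
    rw [fderiv_clm_apply (hd2 (x, y, t, u)) (differentiableAt_const w)]
    simp
  rw [pd3_eq ((pd4_contDiff hF).differentiable (by simp)) x y t u,
      pd4_eq ((pd3_contDiff hF).differentiable (by simp)) x y t u, e4, e3,
      happ, happ, hsymm]

end AuxLemmas

/-- μ¹ = (α³³ + 2ξ³'(t) + η_u − ξ¹_x)f − ξ¹_y g + α¹¹v₁ + α¹²v₂ + β¹, ξ¹ = ξ¹(x,y). -/
def μ1 (ξ3 : ℝ → ℝ) (ξ1 : ℝ × ℝ → ℝ) (η α33 α11 α12 β1 : ℝ × ℝ × ℝ × ℝ → ℝ)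
    (v1 v2 f g : ℝ) (p : ℝ × ℝ × ℝ × ℝ) : ℝ :=
  (α33 p + 2 * deriv ξ3 p.2.2.1 + pd4 η p - qd1 ξ1 (p.1, p.2.1)) * f
    - qd2 ξ1 (p.1, p.2.1) * g + α11 p * v1 + α12 p * v2 + β1 p

/-- μ² = (α³³ + 2ξ³'(t) + η_u − ξ²_y)g − ξ²_x f − α¹²v₁ + α²²v₂ + β², ξ² = ξ²(x,y). -/
def μ2 (ξ3 : ℝ → ℝ) (ξ2 : ℝ × ℝ → ℝ) (η α33 α12 α22 β2 : ℝ × ℝ × ℝ × ℝ → ℝ)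
    (v1 v2 f g : ℝ) (p : ℝ × ℝ × ℝ × ℝ) : ℝ :=
  (α33 p + 2 * deriv ξ3 p.2.2.1 + pd4 η p - qd2 ξ2 (p.1, p.2.1)) * g
    - qd1 ξ2 (p.1, p.2.1) * f - α12 p * v1 + α22 p * v2 + β2 p

/-- ζ₃ = η_t + (η_u + ξ³'(t))v₃. -/
def ζ3 (ξ3 : ℝ → ℝ) (η : ℝ × ℝ × ℝ × ℝ → ℝ) (v3 : ℝ) (p : ℝ × ℝ × ℝ × ℝ) : ℝ :=
  pd3 η p + (pd4 η p + deriv ξ3 p.2.2.1) * v3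

theorem stmt_6
    (ξ1 ξ2 : ℝ × ℝ → ℝ) (ξ3 : ℝ → ℝ) (η α33 α11 α12 α22 β1 β2 : ℝ × ℝ × ℝ × ℝ → ℝ)
    (hξ1 : ContDiff ℝ (⊤ : ℕ∞) ξ1) (hξ2 : ContDiff ℝ (⊤ : ℕ∞) ξ2) (hξ3 : ContDiff ℝ (⊤ : ℕ∞) ξ3)
    (hη : ContDiff ℝ (⊤ : ℕ∞) η) (hα33 : ContDiff ℝ (⊤ : ℕ∞) α33) (hα11 : ContDiff ℝ (⊤ : ℕ∞) α11)
    (hα12 : ContDiff ℝ (⊤ : ℕ∞) α12) (hα22 : ContDiff ℝ (⊤ : ℕ∞) α22)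
    (hβ1 : ContDiff ℝ (⊤ : ℕ∞) β1) (hβ2 : ContDiff ℝ (⊤ : ℕ∞) β2)
    -- ℋ = 0 : ∂ₓμ¹ + v₁∂ᵤμ¹ + ∂_yμ² + v₂∂ᵤμ² − ∂ₜζ₃ − v₃∂ᵤζ₃ = 0 identically
    (hH : ∀ (p : ℝ × ℝ × ℝ × ℝ) (v1 v2 v3 f g : ℝ),
      pd1 (μ1 ξ3 ξ1 η α33 α11 α12 β1 v1 v2 f g) p
        + v1 * pd4 (μ1 ξ3 ξ1 η α33 α11 α12 β1 v1 v2 f g) p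
        + pd2 (μ2 ξ3 ξ2 η α33 α12 α22 β2 v1 v2 f g) p
        + v2 * pd4 (μ2 ξ3 ξ2 η α33 α12 α22 β2 v1 v2 f g) p
        - pd3 (ζ3 ξ3 η v3) p
        - v3 * pd4 (ζ3 ξ3 η v3) p = 0) :
    (∀ p : ℝ × ℝ × ℝ × ℝ, pd4 (pd4 η) p = 0) ∧
    ∃ lam : ℝ × ℝ → ℝ, ∃ γ : ℝ × ℝ × ℝ → ℝ, ContDiff ℝ (⊤ : ℕ∞) lam ∧ ContDiff ℝ (⊤ : ℕ∞) γ ∧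
      ∀ x y t u : ℝ,
        η (x, y, t, u) = (lam (x, y) - (1 / 2) * deriv ξ3 t) * u + γ (x, y, t) := by
  have hηd : Differentiable ℝ η := hη.differentiable (by simp)
  have hpd3η : ContDiff ℝ (⊤ : ℕ∞) (pd3 η) := pd3_contDiff hη
  have hpd4η : ContDiff ℝ (⊤ : ℕ∞) (pd4 η) := pd4_contDiff hη
  have hd3 : Differentiable ℝ (pd3 η) := hpd3η.differentiable (by simp)
  have hd4 : Differentiable ℝ (pd4 η) := hpd4η.differentiable (by simp)
  have hderiv_cd : ∀ f : ℝ → ℝ, ContDiff ℝ (⊤ : ℕ∞) f → ContDiff ℝ (⊤ : ℕ∞) (deriv f) := by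
    intro f hf
    have : deriv f = fun x => fderiv ℝ f x 1 := rfl
    rw [this]
    exact (hf.fderiv_right (by simp)).clm_apply contDiff_const
  have hξ3' : ContDiff ℝ (⊤ : ℕ∞) (deriv ξ3) := hderiv_cd ξ3 hξ3
  have hξ3'd : Differentiable ℝ (deriv ξ3) := hξ3'.differentiable (by simp)
  have hξ3'' : Differentiable ℝ (deriv (deriv ξ3)) :=
    (hderiv_cd _ hξ3').differentiable (by simp)
  -- μ1, μ2 collapse when v1 = v2 = f = g = 0
  have hμ1 : μ1 ξ3 ξ1 η α33 α11 α12 β1 0 0 0 0 = β1 := by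
    funext q; simp [μ1]
  have hμ2 : μ2 ξ3 ξ2 η α33 α12 α22 β2 0 0 0 0 = β2 := by
    funext q; simp [μ2]
  -- derivatives of ζ3
  have hζ3t : ∀ (x y t u v3 : ℝ), pd3 (ζ3 ξ3 η v3) (x, y, t, u)
      = pd3 (pd3 η) (x, y, t, u)
        + (pd3 (pd4 η) (x, y, t, u) + deriv (deriv ξ3) t) * v3 := by
    intro x y t u v3
    have h1 : HasDerivAt (fun s => pd3 η (x, y, s, u)) (pd3 (pd3 η) (x, y, t, u)) t :=
      line3_hasDerivAt' hd3 x y t u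
    have h2 : HasDerivAt (fun s => pd4 η (x, y, s, u)) (pd3 (pd4 η) (x, y, t, u)) t :=
      line3_hasDerivAt' hd4 x y t u
    have h3 : HasDerivAt (deriv ξ3) (deriv (deriv ξ3) t) t :=
      (hξ3'd t).hasDerivAt
    exact (h1.add ((h2.add h3).mul_const v3)).deriv
  have hζ3u : ∀ (x y t u v3 : ℝ), pd4 (ζ3 ξ3 η v3) (x, y, t, u)
      = pd4 (pd3 η) (x, y, t, u) + (pd4 (pd4 η) (x, y, t, u) + 0) * v3 := by
    intro x y t u v3
    have h1 : HasDerivAt (fun s => pd3 η (x, y, t, s)) (pd4 (pd3 η) (x, y, t, u)) u :=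
      line4_hasDerivAt' hd3 x y t u
    have h2 : HasDerivAt (fun s => pd4 η (x, y, t, s)) (pd4 (pd4 η) (x, y, t, u)) u :=
      line4_hasDerivAt' hd4 x y t u
    have h3 : HasDerivAt (fun _ : ℝ => deriv ξ3 t) 0 u := hasDerivAt_const u _
    exact (h1.add ((h2.add h3).mul_const v3)).deriv
  -- extract the key identities
  have key : ∀ x y t u : ℝ, pd4 (pd4 η) (x, y, t, u) = 0 ∧
      pd3 (pd4 η) (x, y, t, u) + deriv (deriv ξ3) t + pd4 (pd3 η) (x, y, t, u) = 0 := by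
    intro x y t u
    have h0 := hH (x, y, t, u) 0 0 0 0 0
    have h1 := hH (x, y, t, u) 0 0 1 0 0
    have h2 := hH (x, y, t, u) 0 0 (-1) 0 0
    rw [hμ1, hμ2, hζ3t x y t u 0, hζ3u x y t u 0] at h0
    rw [hμ1, hμ2, hζ3t x y t u 1, hζ3u x y t u 1] at h1
    rw [hμ1, hμ2, hζ3t x y t u (-1), hζ3u x y t u (-1)] at h2
    constructor <;> nlinarith [h0, h1, h2]
  have key1 : ∀ x y t u : ℝ, pd4 (pd4 η) (x, y, t, u) = 0 := fun x y t u => (key x y t u).1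
  have key2 : ∀ x y t u : ℝ,
      pd3 (pd4 η) (x, y, t, u) = -(1 / 2) * deriv (deriv ξ3) t := by
    intro x y t u
    have hs := pd34_symm hη x y t u
    have h := (key x y t u).2
    rw [← hs] at h
    linarith
  refine ⟨fun p => by obtain ⟨x, y, t, u⟩ := p; exact key1 x y t u,
    fun q => pd4 η (q.1, q.2, 0, 0) + (1 / 2) * deriv ξ3 0,
    fun r => η (r.1, r.2.1, r.2.2, 0), ?_, ?_, ?_⟩
  · exact (hpd4η.comp ((contDiff_fst.prodMk (contDiff_snd.prodMk
      (contDiff_const.prodMk contDiff_const))))).add contDiff_const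
  · exact hη.comp (contDiff_fst.prodMk ((contDiff_fst.comp contDiff_snd).prodMk
      ((contDiff_snd.comp contDiff_snd).prodMk contDiff_const)))
  · intro x y t u
    -- pd4 η is constant in u
    have cu : ∀ t u : ℝ, pd4 η (x, y, t, u) = pd4 η (x, y, t, 0) := by
      intro t u
      refine is_const_of_deriv_eq_zero (f := fun s => pd4 η (x, y, t, s))
        (fun s => (line4_hasDerivAt' hd4 x y t s).differentiableAt) (fun s => ?_) u 0
      rw [(line4_hasDerivAt' hd4 x y t s).deriv]
      exact key1 x y t s
    -- pd4 η (x,y,·,0) + ½ ξ3' is constant in t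
    have ct : ∀ t : ℝ, pd4 η (x, y, t, 0) + (1 / 2) * deriv ξ3 t
        = pd4 η (x, y, 0, 0) + (1 / 2) * deriv ξ3 0 := by
      intro t
      refine is_const_of_deriv_eq_zero
        (f := fun s => pd4 η (x, y, s, 0) + (1 / 2) * deriv ξ3 s)
        (fun s => ((line3_hasDerivAt' hd4 x y s 0).add
          (((hξ3'd s).hasDerivAt).const_mul (1 / 2))).differentiableAt)
        (fun s => ?_) t 0
      rw [show deriv (fun s => pd4 η (x, y, s, 0) + 1 / 2 * deriv ξ3 s) s = _ from
        ((line3_hasDerivAt' hd4 x y s 0).add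
        (((hξ3'd s).hasDerivAt).const_mul (1 / 2))).deriv, key2 x y s 0]
      ring
    have hpdc : ∀ s : ℝ, pd4 η (x, y, t, s)
        = pd4 η (x, y, 0, 0) + (1 / 2) * deriv ξ3 0 - (1 / 2) * deriv ξ3 t := by
      intro s
      rw [cu t s]
      linarith [ct t]
    have hfin : η (x, y, t, u)
          - (pd4 η (x, y, 0, 0) + (1 / 2) * deriv ξ3 0 - (1 / 2) * deriv ξ3 t) * u
        = η (x, y, t, 0)
          - (pd4 η (x, y, 0, 0) + (1 / 2) * deriv ξ3 0 - (1 / 2) * deriv ξ3 t) * 0 := by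
      have hder : ∀ s : ℝ, HasDerivAt (fun z : ℝ => η (x, y, t, z)
            - (pd4 η (x, y, 0, 0) + (1 / 2) * deriv ξ3 0 - (1 / 2) * deriv ξ3 t) * z)
          (pd4 η (x, y, t, s)
            - (pd4 η (x, y, 0, 0) + (1 / 2) * deriv ξ3 0 - (1 / 2) * deriv ξ3 t)) s := by
        intro s
        have hCs : HasDerivAt (fun z : ℝ =>
              (pd4 η (x, y, 0, 0) + (1 / 2) * deriv ξ3 0 - (1 / 2) * deriv ξ3 t) * z)
            (pd4 η (x, y, 0, 0) + (1 / 2) * deriv ξ3 0 - (1 / 2) * deriv ξ3 t) s := by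
          simpa using (hasDerivAt_id s).const_mul
            (pd4 η (x, y, 0, 0) + (1 / 2) * deriv ξ3 0 - (1 / 2) * deriv ξ3 t)
        exact (line4_hasDerivAt' hηd x y t s).sub hCs
      refine is_const_of_deriv_eq_zero (fun s => (hder s).differentiableAt)
        (fun s => ?_) u 0
      rw [(hder s).deriv, hpdc s]
      ring
    have hres : η (x, y, t, u)
        = (pd4 η (x, y, 0, 0) + (1 / 2) * deriv ξ3 0 - (1 / 2) * deriv ξ3 t) * u
          + η (x, y, t, 0) := by linarith [hfin]
    exact hres
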